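/- arXiv:1412.7334 — 3 statements merged into one kernel-verified Lean document; each statement's English description precedes it below -/
import Mathlib

section
/- (Prékopa) If h : ℝᵐ × ℝⁿ → [0,∞) is log-concave and integrable in its second argument, then the marginal I(x) = ∫_{ℝⁿ} h(x, y) dy is a log-concave function of x ∈ ℝᵐ. -/
/-!
Fix `x₁, x₂` and `l`. The sections `y ↦ h (x₁, y)`, `y ↦ h (x₂, y)` and
`y ↦ h (l • x₁ + (1 - l) • x₂, y)` satisfy the hypothesis of the Prékopa–Leindler inequality
on `ℝⁿ`, which then bounds the marginal at `l • x₁ + (1 - l) • x₂` from below.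

Prékopa–Leindler passes to products by Fubini, so it suffices to prove it on `ℝ`. There, after
truncating `f`, `g` and scaling them to `sup f = sup g = 1`, the hypothesis gives
`l • {f > t} + (1 - l) • {g > t} ⊆ {h > t}`, where both sets on the left are nonempty for `t < 1`
and empty for `t ≥ 1`. The one-dimensional Brunn–Minkowski inequality and the layer-cake formula
then give `l ∫ f + (1 - l) ∫ g ≤ ∫ h`, and the weighted AM–GM inequality concludes.
-/

open MeasureTheory Set Pointwise
open scoped ENNReal

-- translate `K` to end at `sSup K` and `L` to start there: the images overlap in one point
theorem Real.volume_add_volume_le_of_isCompact {K L : Set ℝ} (hK : IsCompact K) (hL : IsCompact L)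
    (hKne : K.Nonempty) (hLne : L.Nonempty) :
    volume K + volume L ≤ volume (K + L) := by
  set a := sSup K
  set b := sInf L
  have hK' : (· + b) '' K ⊆ K + L :=
    image_subset_iff.2 fun x hx => add_mem_add hx (hL.sInf_mem hLne)
  have hL' : (a + ·) '' L ⊆ K + L :=
    image_subset_iff.2 fun y hy => add_mem_add (hK.sSup_mem hKne) hy
  have hinter : (· + b) '' K ∩ (a + ·) '' L ⊆ {a + b} := by
    rintro _ ⟨⟨x, hx, rfl⟩, ⟨y, hy, hxy⟩⟩
    have : x ≤ a := le_csSup hK.bddAbove hx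
    have : b ≤ y := csInf_le hL.bddBelow hy
    simp only [mem_singleton_iff] at hxy ⊢
    linarith
  have hmeas : MeasurableSet ((a + ·) '' L) := (hL.image (continuous_const_add a)).measurableSet
  calc volume K + volume L = volume ((· + b) '' K) + volume ((a + ·) '' L) := by
        simp only [image_add_right, image_add_left, measure_preimage_add_right,
          measure_preimage_add]
    _ = volume ((· + b) '' K ∪ (a + ·) '' L) + volume ((· + b) '' K ∩ (a + ·) '' L) :=
        (measure_union_add_inter _ hmeas).symm
    _ ≤ volume (K + L) + volume ({a + b} : Set ℝ) :=
        add_le_add (measure_mono (union_subset hK' hL')) (measure_mono hinter)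
    _ = volume (K + L) := by simp

theorem Real.volume_add_volume_le {A B : Set ℝ} (hA : MeasurableSet A) (hB : MeasurableSet B)
    (hAne : A.Nonempty) (hBne : B.Nonempty) :
    volume A + volume B ≤ volume (A + B) := by
  obtain ⟨a, ha⟩ := hAne
  obtain ⟨b, hb⟩ := hBne
  rw [hA.measure_eq_iSup_isCompact, hB.measure_eq_iSup_isCompact]
  simp only [iSup_and']
  refine ENNReal.biSup_add_biSup_le' ⟨∅, empty_subset _, isCompact_empty⟩
    ⟨∅, empty_subset _, isCompact_empty⟩ fun K ⟨hKA, hK⟩ L ⟨hLB, hL⟩ => ?_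
  calc volume K + volume L ≤ volume (insert a K) + volume (insert b L) := by
        gcongr <;> exact subset_insert _ _
    _ ≤ volume (insert a K + insert b L) :=
        Real.volume_add_volume_le_of_isCompact (hK.insert a) (hL.insert b)
          (insert_nonempty _ _) (insert_nonempty _ _)
    _ ≤ volume (A + B) :=
        measure_mono (add_subset_add (insert_subset ha hKA) (insert_subset hb hLB))

theorem Real.volume_smul_add_smul_le {A B : Set ℝ} (hA : MeasurableSet A) (hB : MeasurableSet B)
    (hAne : A.Nonempty) (hBne : B.Nonempty) {l : ℝ} (hl0 : 0 < l) (hl1 : l < 1) :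
    ENNReal.ofReal l * volume A + ENNReal.ofReal (1 - l) * volume B
      ≤ volume (l • A + (1 - l) • B) := by
  have h1l : 0 < 1 - l := sub_pos.2 hl1
  have hsmul : ∀ {c : ℝ}, 0 < c → ∀ S : Set ℝ, volume (c • S) = ENNReal.ofReal c * volume S :=
    fun hc S => by simp [Measure.addHaar_smul, abs_of_pos hc]
  rw [← hsmul hl0, ← hsmul h1l]
  exact Real.volume_add_volume_le (hA.const_smul₀ _) (hB.const_smul₀ _) hAne.smul_set hBne.smul_set

theorem ENNReal.rpow_mul_rpow_le_add {l : ℝ} (hl0 : 0 < l) (hl1 : l < 1) (a b : ℝ≥0∞) :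
    a ^ l * b ^ (1 - l) ≤ ENNReal.ofReal l * a + ENNReal.ofReal (1 - l) * b := by
  have h1l : 0 < 1 - l := sub_pos.2 hl1
  rcases eq_or_ne a ∞ with rfl | ha
  · rw [ENNReal.mul_top (ENNReal.ofReal_pos.2 hl0).ne', top_add]
    exact le_top
  rcases eq_or_ne b ∞ with rfl | hb
  · rw [ENNReal.mul_top (ENNReal.ofReal_pos.2 h1l).ne', add_top]
    exact le_top
  lift a to NNReal using ha
  lift b to NNReal using hb
  have key := NNReal.geom_mean_le_arith_mean2_weighted l.toNNReal (1 - l).toNNReal a b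
    (by rw [← Real.toNNReal_add hl0.le h1l.le, add_sub_cancel, Real.toNNReal_one])
  rw [Real.coe_toNNReal _ hl0.le, Real.coe_toNNReal _ h1l.le] at key
  rw [ENNReal.ofReal, ENNReal.ofReal, ← ENNReal.coe_rpow_of_nonneg _ hl0.le,
    ← ENNReal.coe_rpow_of_nonneg _ h1l.le]
  exact_mod_cast key

theorem ENNReal.iSup_rpow_mul_iSup_rpow_le {a b : ℕ → ℝ≥0∞} (ha : Monotone a) (hb : Monotone b)
    {l : ℝ} (hl0 : 0 < l) (hl1 : l < 1) {c : ℝ≥0∞} (h : ∀ k, a k ^ l * b k ^ (1 - l) ≤ c) :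
    (⨆ k, a k) ^ l * (⨆ k, b k) ^ (1 - l) ≤ c := by
  have hrpow : ∀ {p : ℝ}, 0 < p → ∀ u : ℕ → ℝ≥0∞, (⨆ k, u k) ^ p = ⨆ k, u k ^ p :=
    fun hp u => (ENNReal.orderIsoRpow _ hp).map_iSup u
  rw [hrpow hl0, hrpow (sub_pos.2 hl1), ENNReal.iSup_mul]
  refine iSup_le fun i => ?_
  rw [ENNReal.mul_iSup]
  refine iSup_le fun j => (h (max i j)).trans' ?_
  gcongr
  exacts [ha (le_max_left i j), hb (le_max_right i j)]

theorem smul_setOf_lt_add_smul_setOf_lt_subset {E : Type*} [Add E] [SMul ℝ E]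
    {f g h : E → ℝ≥0∞} {l : ℝ} (hl0 : 0 < l) (hl1 : l < 1)
    (hfgh : ∀ x y, f x ^ l * g y ^ (1 - l) ≤ h (l • x + (1 - l) • y)) (t : ℝ≥0∞) :
    l • {x | t < f x} + (1 - l) • {y | t < g y} ⊆ {z | t < h z} := by
  rintro _ ⟨_, ⟨x, hx, rfl⟩, _, ⟨y, hy, rfl⟩, rfl⟩
  calc t = t ^ l * t ^ (1 - l) := by
        rw [← ENNReal.rpow_add_of_nonneg _ _ hl0.le (sub_pos.2 hl1).le, add_sub_cancel,
          ENNReal.rpow_one]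
    _ < f x ^ l * g y ^ (1 - l) :=
        ENNReal.mul_lt_mul (ENNReal.rpow_lt_rpow hx hl0) (ENNReal.rpow_lt_rpow hy (sub_pos.2 hl1))
    _ ≤ h (l • x + (1 - l) • y) := hfgh x y

theorem MeasureTheory.lintegral_eq_lintegral_meas_ofReal_lt {α : Type*} [MeasurableSpace α]
    (μ : Measure α) {f : α → ℝ≥0∞} (hf : Measurable f) (hf_fin : ∀ᵐ x ∂μ, f x ≠ ∞) :
    ∫⁻ x, f x ∂μ = ∫⁻ t in Ioi 0, μ {x | ENNReal.ofReal t < f x} := by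
  calc ∫⁻ x, f x ∂μ = ∫⁻ x, ENNReal.ofReal (f x).toReal ∂μ :=
        lintegral_congr_ae (hf_fin.mono fun x hx => (ENNReal.ofReal_toReal hx).symm)
    _ = ∫⁻ t in Ioi 0, μ {x | t < (f x).toReal} :=
        lintegral_eq_lintegral_meas_lt μ (ae_of_all _ fun _ => ENNReal.toReal_nonneg)
          hf.ennreal_toReal.aemeasurable
    _ = ∫⁻ t in Ioi 0, μ {x | ENNReal.ofReal t < f x} := by
        refine setLIntegral_congr_fun measurableSet_Ioi fun t ht => measure_congr ?_
        filter_upwards [hf_fin] with x hx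
        exact propext (ENNReal.ofReal_lt_iff_lt_toReal (le_of_lt ht) hx).symm

theorem AEMeasurable.exists_measurable_ge_lintegral_eq {α : Type*} [MeasurableSpace α]
    {μ : Measure α} {f : α → ℝ≥0∞} (hf : AEMeasurable f μ) :
    ∃ g : α → ℝ≥0∞, Measurable g ∧ f ≤ g ∧ ∫⁻ x, f x ∂μ = ∫⁻ x, g x ∂μ := by
  classical
  obtain ⟨N, hN, hNm, hN0⟩ := exists_measurable_superset_of_null hf.ae_eq_mk
  have hfN : ∀ x ∉ N, f x = hf.mk f x := fun x hx => not_not.1 fun h => hx (hN h)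
  refine ⟨N.piecewise (fun _ => ∞) (hf.mk f),
    Measurable.piecewise hNm measurable_const hf.measurable_mk, fun x => ?_, lintegral_congr_ae ?_⟩
  · by_cases hx : x ∈ N
    · simp [hx]
    · simp [hx, hfN x hx]
  · filter_upwards [measure_eq_zero_iff_ae_notMem.1 hN0] with x hx
    simp [hx, hfN x hx]

theorem Real.lintegral_weighted_add_le_of_iSup_eq_one {l : ℝ} (hl0 : 0 < l) (hl1 : l < 1)
    {f g h : ℝ → ℝ≥0∞} (hf : Measurable f) (hg : Measurable g) (hh : Measurable h)
    (hfgh : ∀ x y, f x ^ l * g y ^ (1 - l) ≤ h (l • x + (1 - l) • y))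
    (hf1 : ⨆ x, f x = 1) (hg1 : ⨆ y, g y = 1) :
    ENNReal.ofReal l * (∫⁻ x, f x) + ENNReal.ofReal (1 - l) * (∫⁻ y, g y) ≤ ∫⁻ z, h z := by
  rcases eq_or_ne (∫⁻ z, h z) ∞ with htop | htop
  · exact htop ▸ le_top
  have hlevel : ∀ t : ℝ,
      ENNReal.ofReal l * volume {x | ENNReal.ofReal t < f x}
        + ENNReal.ofReal (1 - l) * volume {y | ENNReal.ofReal t < g y}
        ≤ volume {z | ENNReal.ofReal t < h z} := by
    intro t
    rcases lt_or_ge (ENNReal.ofReal t) 1 with ht1 | ht1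
    · have hne : ∀ {u : ℝ → ℝ≥0∞}, ⨆ x, u x = 1 → {x | ENNReal.ofReal t < u x}.Nonempty :=
        fun hu => lt_iSup_iff.1 (hu ▸ ht1 : ENNReal.ofReal t < ⨆ x, _)
      exact (Real.volume_smul_add_smul_le (measurableSet_lt measurable_const hf)
        (measurableSet_lt measurable_const hg) (hne hf1) (hne hg1) hl0 hl1).trans
        (measure_mono (smul_setOf_lt_add_smul_setOf_lt_subset hl0 hl1 hfgh _))
    · have hempty : ∀ {u : ℝ → ℝ≥0∞}, ⨆ x, u x = 1 → {x | ENNReal.ofReal t < u x} = ∅ :=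
        fun hu => eq_empty_of_forall_notMem fun x hx =>
          (hx.trans_le ((le_iSup _ x).trans (hu.trans_le ht1))).false
      simp [hempty hf1, hempty hg1]
  have hfin : ∀ {u : ℝ → ℝ≥0∞}, ⨆ x, u x = 1 → ∀ᵐ x, u x ≠ ∞ := fun hu =>
    ae_of_all _ fun x => ne_top_of_le_ne_top ENNReal.one_ne_top (hu ▸ le_iSup _ x)
  have hmeas : ∀ u : ℝ → ℝ≥0∞, Measurable fun t : ℝ => volume {x | ENNReal.ofReal t < u x} :=
    fun u => Antitone.measurable fun s t hst =>
      measure_mono fun x hx => (ENNReal.ofReal_le_ofReal hst).trans_lt hx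
  rw [lintegral_eq_lintegral_meas_ofReal_lt volume hf (hfin hf1),
    lintegral_eq_lintegral_meas_ofReal_lt volume hg (hfin hg1),
    lintegral_eq_lintegral_meas_ofReal_lt volume hh ((ae_lt_top hh htop).mono fun _ => ne_of_lt),
    ← lintegral_const_mul _ (hmeas f), ← lintegral_const_mul _ (hmeas g),
    ← lintegral_add_left ((hmeas f).const_mul _)]
  exact setLIntegral_mono (hmeas h) fun t _ => hlevel t

theorem Real.lintegral_rpow_mul_le_of_iSup_ne_top {l : ℝ} (hl0 : 0 < l) (hl1 : l < 1)
    {f g h : ℝ → ℝ≥0∞} (hf : Measurable f) (hg : Measurable g) (hh : Measurable h)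
    (hfgh : ∀ x y, f x ^ l * g y ^ (1 - l) ≤ h (l • x + (1 - l) • y))
    (hF : ⨆ x, f x ≠ ∞) (hG : ⨆ y, g y ≠ ∞) :
    (∫⁻ x, f x) ^ l * (∫⁻ y, g y) ^ (1 - l) ≤ ∫⁻ z, h z := by
  have h1l : 0 < 1 - l := sub_pos.2 hl1
  set F := ⨆ x, f x
  set G := ⨆ y, g y
  rcases eq_or_ne F 0 with hF0 | hF0
  · simp [ENNReal.iSup_eq_zero.1 hF0, ENNReal.zero_rpow_of_pos hl0]
  rcases eq_or_ne G 0 with hG0 | hG0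
  · simp [ENNReal.iSup_eq_zero.1 hG0, ENNReal.zero_rpow_of_pos h1l]
  set M := F ^ l * G ^ (1 - l)
  have hM0 : M ≠ 0 := mul_ne_zero (ENNReal.rpow_pos (pos_iff_ne_zero.2 hF0) hF).ne'
    (ENNReal.rpow_pos (pos_iff_ne_zero.2 hG0) hG).ne'
  have hMtop : M ≠ ∞ := ENNReal.mul_ne_top (ENNReal.rpow_ne_top_of_nonneg hl0.le hF)
    (ENNReal.rpow_ne_top_of_nonneg h1l.le hG)
  have hscale : ∀ a b : ℝ≥0∞, (a / F) ^ l * (b / G) ^ (1 - l) = a ^ l * b ^ (1 - l) / M := by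
    intro a b
    rw [ENNReal.div_rpow_of_nonneg _ _ hl0.le, ENNReal.div_rpow_of_nonneg _ _ h1l.le,
      ENNReal.mul_div_mul_comm (Or.inr (ENNReal.rpow_ne_top_of_nonneg h1l.le hG))
        (Or.inl (ENNReal.rpow_ne_top_of_nonneg hl0.le hF))]
  have hdiv : ∀ {u : ℝ → ℝ≥0∞}, Measurable u → ∀ c, ∫⁻ x, u x / c = (∫⁻ x, u x) / c :=
    fun hu c => by simp only [div_eq_mul_inv]; exact lintegral_mul_const _ hu
  have hnormalized := Real.lintegral_weighted_add_le_of_iSup_eq_one hl0 hl1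
    (hf.div_const F) (hg.div_const G) (hh.div_const M)
    (fun x y => (hscale _ _).trans_le (ENNReal.div_le_div_right (hfgh x y) M))
    (by rw [← ENNReal.iSup_div, ENNReal.div_self hF0 hF])
    (by rw [← ENNReal.iSup_div, ENNReal.div_self hG0 hG])
  rw [hdiv hf, hdiv hg, hdiv hh] at hnormalized
  calc (∫⁻ x, f x) ^ l * (∫⁻ y, g y) ^ (1 - l)
      = M * (((∫⁻ x, f x) / F) ^ l * ((∫⁻ y, g y) / G) ^ (1 - l)) := by
        rw [hscale, ENNReal.mul_div_cancel hM0 hMtop]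
    _ ≤ M * (ENNReal.ofReal l * ((∫⁻ x, f x) / F)
          + ENNReal.ofReal (1 - l) * ((∫⁻ y, g y) / G)) := by
        gcongr
        exact ENNReal.rpow_mul_rpow_le_add hl0 hl1 _ _
    _ ≤ M * ((∫⁻ z, h z) / M) := by gcongr
    _ = ∫⁻ z, h z := ENNReal.mul_div_cancel hM0 hMtop

def MeasureTheory.Measure.HasPrekopaLeindler {E : Type*} [MeasurableSpace E] [Add E] [SMul ℝ E]
    (μ : Measure E) : Prop :=
  ∀ l : ℝ, 0 < l → l < 1 → ∀ f g h : E → ℝ≥0∞, Measurable f → Measurable g → Measurable h →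
    (∀ x y, f x ^ l * g y ^ (1 - l) ≤ h (l • x + (1 - l) • y)) →
    (∫⁻ x, f x ∂μ) ^ l * (∫⁻ y, g y ∂μ) ^ (1 - l) ≤ ∫⁻ z, h z ∂μ

namespace MeasureTheory.Measure

theorem hasPrekopaLeindler_volume_real : (volume : Measure ℝ).HasPrekopaLeindler := by
  intro l hl0 hl1 f g h hf hg hh hfgh
  have htrunc : ∀ {u : ℝ → ℝ≥0∞}, Measurable u →
      ∫⁻ x, u x = ⨆ k : ℕ, ∫⁻ x, min (u x) k := fun hu => by
    rw [← lintegral_iSup (fun k => hu.min measurable_const)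
      fun i j hij x => min_le_min_left _ (Nat.cast_le.2 hij)]
    congr with x
    rw [← inf_iSup_eq, ENNReal.iSup_natCast, inf_top_eq]
  have hmono : ∀ u : ℝ → ℝ≥0∞, Monotone fun k : ℕ => ∫⁻ x, min (u x) k :=
    fun u i j hij => lintegral_mono fun x => min_le_min_left _ (Nat.cast_le.2 hij)
  have hbdd : ∀ (u : ℝ → ℝ≥0∞) (k : ℕ), ⨆ x, min (u x) k ≠ ∞ := fun u k =>
    ne_top_of_le_ne_top (ENNReal.natCast_ne_top k) (iSup_le fun _ => min_le_right _ _)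
  rw [htrunc hf, htrunc hg]
  refine ENNReal.iSup_rpow_mul_iSup_rpow_le (hmono f) (hmono g) hl0 hl1 fun k => ?_
  refine Real.lintegral_rpow_mul_le_of_iSup_ne_top hl0 hl1 (hf.min measurable_const)
    (hg.min measurable_const) hh (fun x y => (hfgh x y).trans' ?_) (hbdd f k) (hbdd g k)
  gcongr <;> exact min_le_left _ _

theorem HasPrekopaLeindler.prod {E F : Type*} [MeasurableSpace E] [Add E] [SMul ℝ E]
    [MeasurableSpace F] [Add F] [SMul ℝ F] {μ : Measure E} {ν : Measure F} [SFinite ν]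
    (hμ : μ.HasPrekopaLeindler) (hν : ν.HasPrekopaLeindler) : (μ.prod ν).HasPrekopaLeindler := by
  intro l hl0 hl1 f g h hf hg hh hfgh
  rw [lintegral_prod _ hf.aemeasurable, lintegral_prod _ hg.aemeasurable,
    lintegral_prod _ hh.aemeasurable]
  refine hμ l hl0 hl1 _ _ _ hf.lintegral_prod_right' hg.lintegral_prod_right'
    hh.lintegral_prod_right' fun x₁ x₂ => ?_
  exact hν l hl0 hl1 _ _ _ (hf.comp measurable_prodMk_left) (hg.comp measurable_prodMk_left)
    (hh.comp measurable_prodMk_left) fun y₁ y₂ => hfgh (x₁, y₁) (x₂, y₂)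

theorem HasPrekopaLeindler.of_measurePreserving {E F : Type*} [MeasurableSpace E] [Add E]
    [SMul ℝ E] [MeasurableSpace F] [Add F] [SMul ℝ F] {μ : Measure E} {ν : Measure F}
    (hμ : μ.HasPrekopaLeindler) (e : F ≃ᵐ E) (he : MeasurePreserving e ν μ)
    (he_add : ∀ x y, e (x + y) = e x + e y) (he_smul : ∀ (c : ℝ) x, e (c • x) = c • e x) :
    ν.HasPrekopaLeindler := by
  intro l hl0 hl1 f g h hf hg hh hfgh
  have hsymm : ∀ x y, e.symm (l • x + (1 - l) • y) = l • e.symm x + (1 - l) • e.symm y :=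
    fun x y => e.injective (by simp only [he_add, he_smul, MeasurableEquiv.apply_symm_apply])
  rw [← (he.symm e).lintegral_comp hf, ← (he.symm e).lintegral_comp hg,
    ← (he.symm e).lintegral_comp hh]
  refine hμ l hl0 hl1 _ _ _ (hf.comp e.symm.measurable) (hg.comp e.symm.measurable)
    (hh.comp e.symm.measurable) fun x y => ?_
  simpa only [hsymm] using hfgh (e.symm x) (e.symm y)

theorem hasPrekopaLeindler_of_unique {E : Type*} [MeasurableSpace E] [Add E] [SMul ℝ E]
    [Unique E] (μ : Measure E) [IsProbabilityMeasure μ] : μ.HasPrekopaLeindler := by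
  intro l _ _ f g h _ _ _ hfgh
  simpa only [lintegral_unique, measure_univ, mul_one, Subsingleton.elim _ (default : E)]
    using hfgh default default

theorem hasPrekopaLeindler_volume_pi (n : ℕ) :
    (volume : Measure (Fin n → ℝ)).HasPrekopaLeindler := by
  induction n with
  | zero =>
    rw [volume_pi, pi_of_empty]
    exact hasPrekopaLeindler_of_unique _
  | succ n ih =>
    have hprod : (volume : Measure (ℝ × (Fin n → ℝ))).HasPrekopaLeindler := by
      rw [volume_eq_prod]
      exact hasPrekopaLeindler_volume_real.prod ih
    exact hprod.of_measurePreserving _ (volume_preserving_piFinSuccAbove (fun _ => ℝ) 0)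
      (fun _ _ => rfl) fun _ _ => rfl

theorem HasPrekopaLeindler.lintegral_rpow_mul_le {E : Type*} [MeasurableSpace E] [Add E]
    [SMul ℝ E] {μ : Measure E} (hμ : μ.HasPrekopaLeindler) {l : ℝ} (hl0 : 0 < l) (hl1 : l < 1)
    {f g h : E → ℝ≥0∞} (hh : AEMeasurable h μ)
    (hfgh : ∀ x y, f x ^ l * g y ^ (1 - l) ≤ h (l • x + (1 - l) • y)) :
    (∫⁻ x, f x ∂μ) ^ l * (∫⁻ y, g y ∂μ) ^ (1 - l) ≤ ∫⁻ z, h z ∂μ := by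
  obtain ⟨f', hf', hf'f, hf_eq⟩ := exists_measurable_le_lintegral_eq μ f
  obtain ⟨g', hg', hg'g, hg_eq⟩ := exists_measurable_le_lintegral_eq μ g
  obtain ⟨h', hh', hhh', hh_eq⟩ := hh.exists_measurable_ge_lintegral_eq
  rw [hf_eq, hg_eq, hh_eq]
  refine hμ l hl0 hl1 f' g' h' hf' hg' hh' fun x y => ?_
  calc f' x ^ l * g' y ^ (1 - l) ≤ f x ^ l * g y ^ (1 - l) := by
        gcongr
        exacts [hf'f x, hg'g y]
    _ ≤ h' (l • x + (1 - l) • y) := (hfgh x y).trans (hhh' _)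

theorem HasPrekopaLeindler.integral_rpow_mul_le {E : Type*} [MeasurableSpace E] [Add E]
    [SMul ℝ E] {μ : Measure E} (hμ : μ.HasPrekopaLeindler) {l : ℝ} (hl0 : 0 < l) (hl1 : l < 1)
    {f g h : E → ℝ} (hf : 0 ≤ f) (hg : 0 ≤ g) (hh : 0 ≤ h) (hf_meas : AEStronglyMeasurable f μ)
    (hg_meas : AEStronglyMeasurable g μ) (hh_int : Integrable h μ)
    (hfgh : ∀ x y, f x ^ l * g y ^ (1 - l) ≤ h (l • x + (1 - l) • y)) :
    (∫ x, f x ∂μ) ^ l * (∫ y, g y ∂μ) ^ (1 - l) ≤ ∫ z, h z ∂μ := by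
  have hle := hμ.lintegral_rpow_mul_le hl0 hl1 hh_int.aemeasurable.ennreal_ofReal
    (f := fun x => ENNReal.ofReal (f x)) (g := fun y => ENNReal.ofReal (g y)) fun x y => by
      rw [ENNReal.ofReal_rpow_of_nonneg (hf x) hl0.le,
        ENNReal.ofReal_rpow_of_nonneg (hg y) (sub_pos.2 hl1).le,
        ← ENNReal.ofReal_mul (Real.rpow_nonneg (hf x) _)]
      exact ENNReal.ofReal_le_ofReal (hfgh x y)
  rw [integral_eq_lintegral_of_nonneg_ae (ae_of_all _ hf) hf_meas,
    integral_eq_lintegral_of_nonneg_ae (ae_of_all _ hg) hg_meas,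
    integral_eq_lintegral_of_nonneg_ae (ae_of_all _ hh) hh_int.1, ENNReal.toReal_rpow,
    ENNReal.toReal_rpow, ← ENNReal.toReal_mul]
  exact ENNReal.toReal_mono hh_int.lintegral_lt_top.ne hle

end MeasureTheory.Measure

/-- Prékopa's theorem: the marginal of a log-concave nonnegative integrable
function is log-concave. -/
theorem prekopa_marginal_logconcave
    (m n : ℕ) (h : (Fin m → ℝ) × (Fin n → ℝ) → ℝ)
    (hnonneg : ∀ z, 0 ≤ h z)
    (hlc : ∀ z₁ z₂ : (Fin m → ℝ) × (Fin n → ℝ), ∀ l : ℝ, 0 ≤ l → l ≤ 1 →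
      h (l • z₁ + (1 - l) • z₂) ≥ h z₁ ^ l * h z₂ ^ (1 - l))
    (hint : ∀ x : Fin m → ℝ, Integrable (fun y => h (x, y)))
    (I : (Fin m → ℝ) → ℝ) (hI : I = fun x => ∫ y, h (x, y)) :
    ∀ x₁ x₂ : Fin m → ℝ, ∀ l : ℝ, 0 ≤ l → l ≤ 1 →
      I (l • x₁ + (1 - l) • x₂) ≥ I x₁ ^ l * I x₂ ^ (1 - l) := by
  subst hI
  intro x₁ x₂ l hl0 hl1
  rcases hl0.eq_or_lt with rfl | hl0
  · simp
  rcases hl1.eq_or_lt with rfl | hl1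
  · simp
  exact (Measure.hasPrekopaLeindler_volume_pi n).integral_rpow_mul_le hl0 hl1 (fun _ => hnonneg _)
    (fun _ => hnonneg _) (fun _ => hnonneg _) (hint x₁).1 (hint x₂).1 (hint _)
    fun y₁ y₂ => hlc (x₁, y₁) (x₂, y₂) l hl0.le hl1.le
end

section
/- Let C be a symmetric positive definite m×m real matrix and n > 0. The function Σ ↦ −(n/2) log det Σ − (1/2) tr(Σ⁻¹ C) over symmetric positive definite matrices Σ attains its unique maximum at Σ* = C/n. -/
open Matrix Real Finset
open scoped MatrixOrder

/-!
Factor `C = Xᴴ * X` with `X` invertible and whiten: for `B = X * S⁻¹ * Xᴴ`, which is positive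
definite, the objective equals `-(n/2) log det C + (n log det B - tr B) / 2`. Over the eigenvalues
`μᵢ` of `B` the bracket is `∑ᵢ (n log μᵢ - μᵢ)`, and by `log x ≤ x - 1` each term is maximal
exactly at `μᵢ = n`. So the maximum is attained exactly at `B = n • 1`, i.e. at `S = n⁻¹ • C`.
-/

theorem Real.mul_log_sub_lt_mul_log_sub {a t : ℝ} (ha : 0 < a) (ht : 0 < t) (hta : t ≠ a) :
    a * log t - t < a * log a - a := by
  have h := log_lt_sub_one_of_pos (div_pos ht ha) (by rwa [ne_eq, div_eq_one_iff_eq ha.ne'])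
  rw [log_div ht.ne' ha.ne'] at h
  have h' : a * (log t - log a) < a * (t / a - 1) := mul_lt_mul_of_pos_left h ha
  rw [mul_sub_one, mul_div_cancel₀ t ha.ne'] at h'
  linarith

theorem Real.mul_log_sub_le_mul_log_sub {a t : ℝ} (ha : 0 < a) (ht : 0 < t) :
    a * log t - t ≤ a * log a - a := by
  rcases eq_or_ne t a with rfl | hta
  · exact le_rfl
  · exact (mul_log_sub_lt_mul_log_sub ha ht hta).le

namespace Matrix

variable {ι : Type*} [Fintype ι] [DecidableEq ι]

theorem IsHermitian.eq_smul_one_of_eigenvalues_eq {𝕜 : Type*} [RCLike 𝕜] {A : Matrix ι ι 𝕜}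
    (hA : A.IsHermitian) {a : ℝ} (h : ∀ i, hA.eigenvalues i = a) : A = a • 1 := by
  have hspec : Set.EqOn id (fun _ => a) (spectrum ℝ A) := by
    rw [hA.spectrum_real_eq_range_eigenvalues]
    rintro _ ⟨i, rfl⟩
    exact h i
  rw [← cfc_id ℝ A hA.isSelfAdjoint, cfc_congr hspec, cfc_const a A,
    Algebra.algebraMap_eq_smul_one]

theorem mul_log_det_smul_one_sub_trace (a : ℝ) :
    a * log (a • 1 : Matrix ι ι ℝ).det - (a • 1 : Matrix ι ι ℝ).trace
      = Fintype.card ι * (a * log a - a) := by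
  rw [det_smul, det_one, mul_one, log_pow, trace_smul, trace_one, smul_eq_mul]
  ring

namespace PosDef

variable {B : Matrix ι ι ℝ}

theorem mul_log_det_sub_trace_eq_sum (hB : B.PosDef) (a : ℝ) :
    a * log B.det - B.trace = ∑ i, (a * log (hB.1.eigenvalues i) - hB.1.eigenvalues i) := by
  have hdet : B.det = ∏ i, hB.1.eigenvalues i := by simpa using hB.1.det_eq_prod_eigenvalues
  have htr : B.trace = ∑ i, hB.1.eigenvalues i := by simpa using hB.1.trace_eq_sum_eigenvalues
  rw [hdet, htr, log_prod fun i _ => (hB.eigenvalues_pos i).ne', mul_sum, sum_sub_distrib]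

theorem mul_log_det_sub_trace_le (hB : B.PosDef) {a : ℝ} (ha : 0 < a) :
    a * log B.det - B.trace ≤ Fintype.card ι * (a * log a - a) := by
  rw [hB.mul_log_det_sub_trace_eq_sum, ← card_univ, ← nsmul_eq_mul, ← sum_const]
  exact sum_le_sum fun i _ => mul_log_sub_le_mul_log_sub ha (hB.eigenvalues_pos i)

theorem eq_smul_one_of_mul_log_det_sub_trace_eq (hB : B.PosDef) {a : ℝ} (ha : 0 < a)
    (h : a * log B.det - B.trace = Fintype.card ι * (a * log a - a)) : B = a • 1 := by
  rw [hB.mul_log_det_sub_trace_eq_sum, ← card_univ, ← nsmul_eq_mul, ← sum_const,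
    sum_eq_sum_iff_of_le fun i _ => mul_log_sub_le_mul_log_sub ha (hB.eigenvalues_pos i)] at h
  refine hB.1.eq_smul_one_of_eigenvalues_eq fun i => ?_
  by_contra hi
  exact (mul_log_sub_lt_mul_log_sub ha (hB.eigenvalues_pos i) hi).ne (h i (mem_univ i))

end PosDef

section Whitening

variable {R : Type*} [Field R] [StarRing R] {X S T : Matrix ι ι R}

theorem mul_inv_mul_conjTranspose_inj (hX : IsUnit X) (hS : IsUnit S.det)
    (h : X * S⁻¹ * Xᴴ = X * T⁻¹ * Xᴴ) : S = T := by
  have hXH : IsUnit Xᴴ := by simpa using hX.star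
  refine inv_inj ?_ hS
  exact hX.mul_left_cancel (hXH.mul_right_cancel h)

theorem mul_inv_smul_conjTranspose_mul_self_mul_conjTranspose {c : R} (hc : c ≠ 0)
    (hX : IsUnit X) : X * (c⁻¹ • (Xᴴ * X))⁻¹ * Xᴴ = c • 1 := by
  have hXH : IsUnit Xᴴ := by simpa using hX.star
  have hXd := (isUnit_iff_isUnit_det X).mp hX
  have hXHd := (isUnit_iff_isUnit_det _).mp hXH
  rw [inv_eq_left_inv (B := c • (X⁻¹ * Xᴴ⁻¹))]
  · rw [Matrix.mul_smul, Matrix.smul_mul, mul_assoc, mul_assoc, nonsing_inv_mul _ hXHd, mul_one,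
      mul_nonsing_inv _ hXd]
  · rw [Matrix.smul_mul, Matrix.mul_smul, smul_smul, mul_inv_cancel₀ hc, one_smul, mul_assoc,
      ← mul_assoc Xᴴ⁻¹, nonsing_inv_mul _ hXHd, one_mul, nonsing_inv_mul _ hXd]

end Whitening

variable {X S : Matrix ι ι ℝ}

theorem log_det_mul_inv_mul_conjTranspose (hX : IsUnit X.det) (hS : IsUnit S.det) :
    log (X * S⁻¹ * Xᴴ).det = log (Xᴴ * X).det - log S.det := by
  have hx := hX.ne_zero
  rw [det_mul, det_mul, det_mul, det_nonsing_inv, Ring.inverse_eq_inv', det_conjTranspose,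
    star_trivial, mul_right_comm, log_mul (mul_ne_zero hx hx) (inv_ne_zero hS.ne_zero), log_inv,
    ← sub_eq_add_neg]

theorem trace_mul_inv_mul_conjTranspose :
    (X * S⁻¹ * Xᴴ).trace = (S⁻¹ * (Xᴴ * X)).trace := by
  rw [trace_mul_cycle, trace_mul_comm]

end Matrix

/-- M-step covariance update: S ↦ −(n/2) log det S − (1/2) tr(S⁻¹ C) is
uniquely maximized over positive definite matrices at S = C / n. -/
theorem mstep_covariance_update
    (m : ℕ) (C : Matrix (Fin m) (Fin m) ℝ) (hC : C.PosDef)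
    (n : ℝ) (hn : 0 < n)
    (F : Matrix (Fin m) (Fin m) ℝ → ℝ)
    (hF : F = fun S => -(n / 2) * Real.log S.det - (1 / 2) * (S⁻¹ * C).trace) :
    ∀ S : Matrix (Fin m) (Fin m) ℝ, S.PosDef →
      F S ≤ F (n⁻¹ • C) ∧ (F S = F (n⁻¹ • C) → S = n⁻¹ • C) := by
  intro S hS
  obtain ⟨X, rfl⟩ := CStarAlgebra.nonneg_iff_eq_star_mul_self.mp hC.posSemidef.nonneg
  simp only [star_eq_conjTranspose] at hC hF ⊢
  have hXdet : IsUnit X.det := by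
    have := hC.det_pos.ne'.isUnit
    rw [det_mul] at this
    exact (IsUnit.mul_iff.mp this).2
  have hX : IsUnit X := (isUnit_iff_isUnit_det X).mpr hXdet
  have hF_eq : ∀ T, IsUnit T.det → F T = -(n / 2) * log (Xᴴ * X).det
      + (n * log (X * T⁻¹ * Xᴴ).det - (X * T⁻¹ * Xᴴ).trace) / 2 := fun T hT => by
    rw [hF, log_det_mul_inv_mul_conjTranspose hXdet hT, trace_mul_inv_mul_conjTranspose]
    ring
  have hS_det : IsUnit S.det := hS.det_pos.ne'.isUnit
  have hopt_det : IsUnit (n⁻¹ • (Xᴴ * X)).det := (hC.smul (inv_pos.mpr hn)).det_pos.ne'.isUnit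
  have hW : (X * S⁻¹ * Xᴴ).PosDef :=
    hS.inv.mul_mul_conjTranspose_same (vecMul_injective_iff_isUnit.mpr hX)
  rw [hF_eq S hS_det, hF_eq _ hopt_det,
    mul_inv_smul_conjTranspose_mul_self_mul_conjTranspose hn.ne' hX, mul_log_det_smul_one_sub_trace]
  refine ⟨by linarith [hW.mul_log_det_sub_trace_le hn], fun h => ?_⟩
  refine mul_inv_mul_conjTranspose_inj hX hS_det ?_
  rw [mul_inv_smul_conjTranspose_mul_self_mul_conjTranspose hn.ne' hX]
  exact hW.eq_smul_one_of_mul_log_det_sub_trace_eq hn (by linarith)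
end

section
/- Let X be a random vector in ℝᵐ with a density, and let Q(θ|θ') = E^{θ'}[log f_θ(X, Y) | Y = y] be the expected complete-data log-likelihood of a latent-variable model with observed data y and latent X. If θ^{k+1} maximizes θ ↦ Q(θ|θ^k), then the observed-data log-likelihood is non-decreasing: log L(θ^{k+1}; y) ≥ log L(θ^k; y). -/
open MeasureTheory

/-! Write `p = f θᵏ / L θᵏ` and `q = f θ / L θ` for the conditional densities of the latent
variable. Then `Q(θ|θᵏ) - Q(θᵏ|θᵏ) - (log L θ - log L θᵏ) = ∫ p log (q / p)`, which is
`-KL(p ‖ q) ≤ ∫ (q - p) = 0` by `log t ≤ t - 1`. Hence a step that does not decrease `Q(·|θᵏ)`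
does not decrease `log L`. -/

theorem Real.mul_log_div_le_sub {a b : ℝ} (ha : 0 < a) (hb : 0 < b) :
    a * Real.log (b / a) ≤ b - a :=
  calc a * Real.log (b / a) ≤ a * (b / a - 1) :=
        mul_le_mul_of_nonneg_left (Real.log_le_sub_one_of_pos (div_pos hb ha)) ha.le
    _ = b - a := by field_simp

namespace MeasureTheory

variable {α : Type*} [MeasurableSpace α] {μ : Measure α} {f g : α → ℝ}

theorem integral_log_mul_sub_le_log_integral_sub
    (hf : ∀ᵐ x ∂μ, 0 < f x) (hg : ∀ᵐ x ∂μ, 0 < g x)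
    (hfi : Integrable f μ) (hgi : Integrable g μ)
    (hF : 0 < ∫ x, f x ∂μ) (hG : 0 < ∫ x, g x ∂μ)
    (hlogg : Integrable (fun x => Real.log (g x) * (f x / ∫ x, f x ∂μ)) μ)
    (hlogf : Integrable (fun x => Real.log (f x) * (f x / ∫ x, f x ∂μ)) μ) :
    ∫ x, Real.log (g x) * (f x / ∫ x, f x ∂μ) ∂μ
        - ∫ x, Real.log (f x) * (f x / ∫ x, f x ∂μ) ∂μ
      ≤ Real.log (∫ x, g x ∂μ) - Real.log (∫ x, f x ∂μ) := by
  set F := ∫ x, f x ∂μ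
  set G := ∫ x, g x ∂μ
  set c := Real.log G - Real.log F
  have hp : Integrable (fun x => f x / F) μ := hfi.div_const F
  have hq : Integrable (fun x => g x / G) μ := hgi.div_const G
  have hp_one : ∫ x, f x / F ∂μ = 1 := by rw [integral_div, div_self hF.ne']
  have hq_one : ∫ x, g x / G ∂μ = 1 := by rw [integral_div, div_self hG.ne']
  have gibbs : ∀ᵐ x ∂μ, Real.log (g x) * (f x / F) - Real.log (f x) * (f x / F)
      - c * (f x / F) ≤ g x / G - f x / F := by
    filter_upwards [hf, hg] with x hfx hgx
    calc _ = f x / F * Real.log ((g x / G) / (f x / F)) := by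
          rw [Real.log_div (by positivity) (by positivity), Real.log_div hgx.ne' hG.ne',
            Real.log_div hfx.ne' hF.ne']
          ring
      _ ≤ g x / G - f x / F := Real.mul_log_div_le_sub (div_pos hfx hF) (div_pos hgx hG)
  have hdiff : Integrable (fun x => Real.log (g x) * (f x / F) - Real.log (f x) * (f x / F)) μ :=
    hlogg.sub hlogf
  have hintegrated := integral_mono_ae (hdiff.sub (hp.const_mul c)) (hq.sub hp) gibbs
  simp only [Pi.sub_apply] at hintegrated
  rw [integral_sub hdiff (hp.const_mul c), integral_sub hlogg hlogf,
    integral_sub hq hp, integral_const_mul, hp_one, hq_one] at hintegrated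
  linarith

end MeasureTheory

/-- EM monotonicity (Dempster–Laird–Rubin): maximizing the expected
complete-data log-likelihood Q(·|θᵏ) does not decrease the observed-data
log-likelihood. Here `f θ` is the joint density of the latent variable X with
the observed data y absorbed, `L θ = ∫ f θ x dx` is the observed-data
likelihood, and `Q θ θ' = ∫ log (f θ x) · f θ' x / L θ' dx`. -/
theorem em_monotonicity
    {Θ : Type*} (m : ℕ)
    (f : Θ → (Fin m → ℝ) → ℝ)
    (hf_pos : ∀ θ x, 0 < f θ x)
    (hf_int : ∀ θ, Integrable (f θ))
    (L : Θ → ℝ) (hL : L = fun θ => ∫ x, f θ x)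
    (hLpos : ∀ θ, 0 < L θ)
    (Q : Θ → Θ → ℝ)
    (hQ : Q = fun θ θ' => ∫ x, Real.log (f θ x) * (f θ' x / L θ'))
    (hQint : ∀ θ θ', Integrable (fun x => Real.log (f θ x) * (f θ' x / L θ')))
    (θk θk1 : Θ)
    (hmax : ∀ θ, Q θ θk ≤ Q θk1 θk) :
    Real.log (L θk) ≤ Real.log (L θk1) := by
  subst hQ hL
  have hQ_step := hmax θk
  have hgibbs := integral_log_mul_sub_le_log_integral_sub
    (.of_forall (hf_pos θk)) (.of_forall (hf_pos θk1)) (hf_int θk) (hf_int θk1)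
    (hLpos θk) (hLpos θk1) (hQint θk1 θk) (hQint θk θk)
  dsimp only at hQ_step ⊢
  linarith
end
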